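/- Let (R, m) be a Cohen-Macaulay local ring of dimension one in which every m-primary ideal has a principal reduction, and let I be a regular ideal of R. If I is a reduction of tr_R(I) (i.e. tr_R(I)^{n+1} = I · tr_R(I)^n for some n > 0), then R : I ⊆ R̄, i.e. every α in the total quotient ring Q(R) with αI ⊆ R is integral over R. -/
import Mathlib


/-- The trace ideal `tr_R(M) = Σ_{f ∈ Hom_R(M,R)} Im f`. -/
noncomputable def traceIdeal (R M : Type*) [CommRing R] [AddCommGroup M] [Module R M] : Ideal R :=
  ⨆ f : M →ₗ[R] R, LinearMap.range f

/-- Let `(R, m)` be a one-dimensional Cohen-Macaulay local ring in which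
every `m`-primary ideal has a principal reduction, and let `I` be a regular ideal.  If `I`
is a reduction of `tr_R(I)` (`tr_R(I)^(n+1) = I · tr_R(I)^n` for some `n > 0`), then
`R : I ⊆ R̄`: every `α ∈ Q(R)` with `αI ⊆ R` is integral over `R`. -/
theorem stmt9 (R : Type*) [CommRing R] [IsNoetherianRing R] [IsLocalRing R]
    (hdim : ringKrullDim R = 1)
    (hdepth : ∃ x ∈ IsLocalRing.maximalIdeal R, x ∈ nonZeroDivisors R)
    (hpr : ∀ J : Ideal R, J.radical = IsLocalRing.maximalIdeal R →
      ∃ a ∈ J, ∃ n : ℕ, 0 < n ∧ J ^ (n + 1) = Ideal.span {a} * J ^ n)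
    (I : Ideal R) (hreg : ∃ x ∈ I, x ∈ nonZeroDivisors R)
    (hred : ∃ n : ℕ, 0 < n ∧ (traceIdeal R ↥I) ^ (n + 1) = I * (traceIdeal R ↥I) ^ n) :
    ∀ α : FractionRing R,
      (∀ y ∈ I, ∃ r : R,
        algebraMap R (FractionRing R) r = α * algebraMap R (FractionRing R) y) →
      α ∈ integralClosure R (FractionRing R) := by
  intro α h
  have hφinj : Function.Injective (algebraMap R (FractionRing R)) :=
    IsFractionRing.injective R (FractionRing R)
  obtain ⟨n, hn, hredn⟩ := hred
  obtain ⟨x, hxI, hxnzd⟩ := hreg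
  -- I ≤ T (via the inclusion map)
  have hIT : I ≤ traceIdeal R ↥I := by
    have := le_iSup (fun f : ↥I →ₗ[R] R => LinearMap.range f) (I.subtype)
    rwa [Submodule.range_subtype] at this
  -- build the linear map f : I →ₗ R corresponding to multiplication by α
  have hgex : ∀ y : ↥I, ∃ r : R,
      algebraMap R (FractionRing R) r = α * algebraMap R (FractionRing R) (y : R) :=
    fun y => h y.1 y.2
  choose g hg using hgex
  have gadd : ∀ y z : ↥I, g (y + z) = g y + g z := by
    intro y z
    apply hφinj
    rw [map_add, hg, hg, hg, Submodule.coe_add, map_add, mul_add]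
  have gsmul : ∀ (r : R) (y : ↥I), g (r • y) = r • g y := by
    intro r y
    apply hφinj
    rw [hg, Submodule.coe_smul, smul_eq_mul, map_mul, smul_eq_mul, map_mul, hg]
    ring
  let f : ↥I →ₗ[R] R := { toFun := g, map_add' := gadd, map_smul' := gsmul }
  have hfT : ∀ y : ↥I, f y ∈ traceIdeal R ↥I := fun y =>
    le_iSup (fun f : ↥I →ₗ[R] R => LinearMap.range f) f ⟨y, rfl⟩
  -- the submodule N = image of T^(n+1) in the fraction ring
  set N : Submodule R (FractionRing R) :=
    Submodule.map (Algebra.linearMap R (FractionRing R))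
      (((traceIdeal R ↥I) ^ (n + 1)) : Ideal R) with hN
  have hstab : ∀ z ∈ N, α * z ∈ N := by
    rintro _ ⟨t, ht, rfl⟩
    rw [hredn] at ht
    refine Submodule.mul_induction_on ht ?_ ?_
    · intro y hy u hu
      have heq : α * (Algebra.linearMap R (FractionRing R)) (y * u)
          = (Algebra.linearMap R (FractionRing R)) (f ⟨y, hy⟩ * u) := by
        simp only [Algebra.linearMap_apply, map_mul]
        rw [show f ⟨y, hy⟩ = g ⟨y, hy⟩ from rfl, hg ⟨y, hy⟩]
        ring
      rw [heq]
      refine ⟨f ⟨y, hy⟩ * u, ?_, rfl⟩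
      have : f ⟨y, hy⟩ * u ∈ traceIdeal R ↥I * (traceIdeal R ↥I) ^ n :=
        Ideal.mul_mem_mul (hfT _) hu
      rwa [← pow_succ'] at this
    · intro a b ha hb
      rw [map_add, mul_add]
      exact N.add_mem ha hb
  -- N is finite
  have hfg : N.FG :=
    Submodule.FG.map _ (IsNoetherian.noetherian ((traceIdeal R ↥I) ^ (n + 1)))
  haveI : Module.Finite R ↥N := Module.Finite.iff_fg.mpr hfg
  -- multiplication by α as an endomorphism of N
  let e : Module.End R N :=
    { toFun := fun w => ⟨α * w.1, hstab _ w.2⟩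
      map_add' := by intro w w'; ext; simp [mul_add]
      map_smul' := by
        intro r w; ext
        simp only [Submodule.coe_smul, RingHom.id_apply, SetLike.val_smul]
        rw [Algebra.smul_def, Algebra.smul_def]
        ring }
  obtain ⟨p, pmonic, hp⟩ := LinearMap.exists_monic_and_aeval_eq_zero R e
  have hp' : Polynomial.aeval e p = 0 := hp
  -- evaluation claim
  have hev : ∀ (q : Polynomial R) (w : N),
      ((Polynomial.aeval e q w : N) : FractionRing R) = Polynomial.aeval α q * (w : FractionRing R) := by
    intro q
    induction q using Polynomial.induction_on with
    | C a =>
        intro w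
        simp [Algebra.smul_def, Module.algebraMap_end_apply]
    | add q r hq hr =>
        intro w
        simp only [map_add, LinearMap.add_apply, Submodule.coe_add, hq, hr, add_mul]
    | monomial k a hk =>
        intro w
        have h1 : Polynomial.aeval e (Polynomial.C a * Polynomial.X ^ (k + 1))
            = Polynomial.aeval e (Polynomial.C a * Polynomial.X ^ k) * e := by
          rw [pow_succ, ← mul_assoc, map_mul, Polynomial.aeval_X]
        rw [h1]
        have h2 : (Polynomial.aeval e (Polynomial.C a * Polynomial.X ^ k) * e) w
            = Polynomial.aeval e (Polynomial.C a * Polynomial.X ^ k) (e w) := rfl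
        rw [h2, hk (e w)]
        have h3 : ((e w : N) : FractionRing R) = α * (w : FractionRing R) := rfl
        rw [h3]
        simp only [map_mul, Polynomial.aeval_X, pow_succ]
        ring
  -- the distinguished element of N
  have hxT : x ^ (n + 1) ∈ (traceIdeal R ↥I) ^ (n + 1) :=
    Ideal.pow_mem_pow (hIT hxI) (n + 1)
  let v : N := ⟨algebraMap R (FractionRing R) (x ^ (n + 1)), ⟨x ^ (n + 1), hxT, rfl⟩⟩
  have hz : Polynomial.aeval α p * (v : FractionRing R) = 0 := by
    rw [← hev p v, hp']
    simp
  have hu : IsUnit ((v : FractionRing R)) :=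
    IsLocalization.map_units (FractionRing R)
      (⟨x ^ (n + 1), pow_mem hxnzd (n + 1)⟩ : nonZeroDivisors R)
  exact ⟨p, pmonic, (IsUnit.mul_left_eq_zero hu).mp hz⟩
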